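/- Let r, s ≥ 0 be integers with r ≥ s and n = 2(r+s) ≥ 2, and let v ∈ (ℤ/4ℤ)^n have type (0, 1, n−2, 1). Then (n−1) · λ(v) = −C(n; r,s,r,s). -/
import Mathlib


/-- The number of coordinates of `v ∈ (ℤ/4ℤ)^n` equal to `k`. -/
def typeCount {n : ℕ} (v : Fin n → ZMod 4) (k : ZMod 4) : ℕ :=
  (Finset.univ.filter fun i => v i = k).card

/-- `v ∈ (ℤ/4ℤ)^n` has type `(t₀, t₁, t₂, t₃)`. -/
def HasType {n : ℕ} (v : Fin n → ZMod 4) (t0 t1 t2 t3 : ℕ) : Prop :=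
  typeCount v 0 = t0 ∧ typeCount v 1 = t1 ∧ typeCount v 2 = t2 ∧ typeCount v 3 = t3

instance {n : ℕ} (v : Fin n → ZMod 4) (t0 t1 t2 t3 : ℕ) :
    Decidable (HasType v t0 t1 t2 t3) := by
  unfold HasType; infer_instance

/-- `|S(v, a)|`: the number of vectors `b` of type `(r, s, r, s)` with
`v · b = a` in `ℤ/4ℤ`. -/
def Scard {n : ℕ} (r s : ℕ) (v : Fin n → ZMod 4) (a : ZMod 4) : ℕ :=
  (Finset.univ.filter fun b : Fin n → ZMod 4 =>
    HasType b r s r s ∧ (∑ i, v i * b i) = a).card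

/-- The eigenvalue `λ(v) = |S(v,0)| - |S(v,2)|` of `Cay((ℤ/4ℤ)^n, S)`. -/
def lambdaEV {n : ℕ} (r s : ℕ) (v : Fin n → ZMod 4) : ℤ :=
  (Scard r s v 0 : ℤ) - (Scard r s v 2 : ℤ)

/-- The multinomial coefficient `C(n; r, s, r, s)` (with `n = 2(r+s)`). -/
def multinomRSRS (r s : ℕ) : ℕ :=
  Nat.multinomial Finset.univ ![r, s, r, s]


open Finset

lemma zmod4_cases : ∀ x : ZMod 4, x = 0 ∨ x = 1 ∨ x = 2 ∨ x = 3 := by decide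

lemma zmod4_univ : (Finset.univ : Finset (ZMod 4)) = {0, 1, 2, 3} := by decide

lemma zmod4_sum {M : Type*} [AddCommMonoid M] (f : ZMod 4 → M) :
    ∑ k, f k = f 0 + (f 1 + (f 2 + f 3)) := by
  rw [zmod4_univ]
  rw [show ({0, 1, 2, 3} : Finset (ZMod 4)) = insert 0 (insert 1 (insert 2 {3})) from rfl]
  rw [Finset.sum_insert (by decide), Finset.sum_insert (by decide),
    Finset.sum_insert (by decide), Finset.sum_singleton]

lemma zmod4_prod {M : Type*} [CommMonoid M] (f : ZMod 4 → M) :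
    ∏ k, f k = f 0 * (f 1 * (f 2 * f 3)) := by
  rw [zmod4_univ]
  rw [show ({0, 1, 2, 3} : Finset (ZMod 4)) = insert 0 (insert 1 (insert 2 {3})) from rfl]
  rw [Finset.prod_insert (by decide), Finset.prod_insert (by decide),
    Finset.prod_insert (by decide), Finset.prod_singleton]

variable {ι : Type} [Fintype ι] [DecidableEq ι]

/-- fiber count of a function into `ZMod 4`. -/
def cnt (b : ι → ZMod 4) (k : ZMod 4) : ℕ := (Finset.univ.filter fun i => b i = k).card

lemma cnt_eq_sum (b : ι → ZMod 4) (k : ZMod 4) :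
    cnt b k = ∑ i, if b i = k then 1 else 0 :=
  Finset.card_filter _ _

lemma cnt_split (x₀ : ι) (b : ι → ZMod 4) (k : ZMod 4) :
    cnt b k = cnt (fun i : {i : ι // i ≠ x₀} => b i.1) k + (if b x₀ = k then 1 else 0) := by
  rw [cnt_eq_sum, cnt_eq_sum]
  rw [← Finset.add_sum_erase _ _ (Finset.mem_univ x₀)]
  rw [Finset.sum_subtype (p := fun i => i ≠ x₀) (univ.erase x₀) (fun x => by simp) (fun i => if b i = k then 1 else 0)]
  ring

lemma card_restrict (x₀ : ι) (u : ZMod 4) (P : ({i : ι // i ≠ x₀} → ZMod 4) → Prop)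
    [DecidablePred P] :
    (univ.filter fun b : ι → ZMod 4 => b x₀ = u ∧ P (fun i => b i.1)).card
      = (univ.filter fun c : {i : ι // i ≠ x₀} → ZMod 4 => P c).card := by
  apply Finset.card_bij' (fun b _ => fun i : {i : ι // i ≠ x₀} => b i.1)
    (fun c _ => fun i : ι => if h : i = x₀ then u else c ⟨i, h⟩)
  · intro b hb
    simp only [mem_filter, mem_univ, true_and] at hb ⊢
    exact hb.2
  · intro c hc
    simp only [mem_filter, mem_univ, true_and] at hc ⊢
    constructor
    · simp
    · convert hc using 2 with i
      simp [i.2]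
  · intro b hb
    simp only [mem_filter, mem_univ, true_and] at hb
    funext i
    by_cases h : i = x₀
    · subst h; simp [hb.1]
    · simp [h]
  · intro c hc
    funext i
    exact dif_neg i.2
open scoped Nat

lemma card_cnt_eq (m : ℕ) : ∀ (ι : Type) [Fintype ι] [DecidableEq ι], Fintype.card ι = m →
    ∀ g : ZMod 4 → ℕ,
    ((Finset.univ : Finset (ι → ZMod 4)).filter fun b => ∀ k, cnt b k = g k).card
      = if (∑ k, g k) = m then Nat.multinomial Finset.univ g else 0 := by
  induction m with
  | zero =>
    intro ι _ _ hcard g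
    haveI : IsEmpty ι := Fintype.card_eq_zero_iff.mp hcard
    have hb : ∀ b : ι → ZMod 4, ∀ k : ZMod 4, cnt b k = 0 := by
      intro b k
      simp [cnt, Finset.filter_eq_empty_iff]
    by_cases hg : ∀ k : ZMod 4, g k = 0
    · have h1 : ((Finset.univ : Finset (ι → ZMod 4)).filter fun b => ∀ k, cnt b k = g k)
          = Finset.univ := by
        rw [Finset.filter_eq_self]
        intro b _ k
        rw [hb, hg]
      rw [h1]
      have h2 : (∑ k : ZMod 4, g k) = 0 := by simp [hg]
      rw [if_pos h2]
      haveI : Unique (ι → ZMod 4) :=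
        ⟨⟨fun i => isEmptyElim i⟩, fun b => funext fun i => isEmptyElim i⟩
      rw [Finset.card_univ, Fintype.card_unique]
      unfold Nat.multinomial
      simp [hg]
    · push_neg at hg
      obtain ⟨k0, hk0⟩ := hg
      have h1 : ((Finset.univ : Finset (ι → ZMod 4)).filter fun b => ∀ k, cnt b k = g k)
          = ∅ := by
        rw [Finset.filter_eq_empty_iff]
        intro b _ hall
        exact hk0 ((hall k0).symm.trans (hb b k0))
      rw [h1, Finset.card_empty, if_neg]
      intro hS
      exact hk0 (Finset.sum_eq_zero_iff.mp hS k0 (Finset.mem_univ _))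
  | succ m ih =>
    intro ι _ _ hcard g
    obtain ⟨x₀⟩ : Nonempty ι := Fintype.card_pos_iff.mp (by omega)
    have hsub : Fintype.card {i : ι // i ≠ x₀} = m := by
      rw [Fintype.card_subtype]
      have : (Finset.univ.filter fun i : ι => i ≠ x₀) = Finset.univ.erase x₀ := by
        ext i; simp [Finset.mem_erase, and_comm]
      rw [this, Finset.card_erase_of_mem (Finset.mem_univ _), Finset.card_univ, hcard]
      omega
    rw [Finset.card_eq_sum_card_fiberwise
      (f := fun b : ι → ZMod 4 => b x₀) (t := Finset.univ) (fun _ _ => Finset.mem_univ _)]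
    have key : ∀ u : ZMod 4,
        (((Finset.univ : Finset (ι → ZMod 4)).filter fun b => ∀ k, cnt b k = g k).filter
            fun b => b x₀ = u).card
          = if g u = 0 then 0 else
              (if (∑ k, g k) = m + 1 then
                Nat.multinomial Finset.univ (Function.update g u (g u - 1)) else 0) := by
      intro u
      rw [Finset.filter_filter]
      have e1 : ((Finset.univ : Finset (ι → ZMod 4)).filter
            fun b => (∀ k, cnt b k = g k) ∧ b x₀ = u)
          = Finset.univ.filter fun b : ι → ZMod 4 => b x₀ = u ∧
              (∀ k, cnt (fun i : {i : ι // i ≠ x₀} => b i.1) k + (if u = k then 1 else 0) = g k) := by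
        apply Finset.filter_congr
        intro b _
        constructor
        · rintro ⟨h1, h2⟩
          refine ⟨h2, fun k => ?_⟩
          rw [← h1 k, cnt_split x₀ b k, h2]
        · rintro ⟨h2, h1⟩
          refine ⟨fun k => ?_, h2⟩
          rw [cnt_split x₀ b k, h2, h1 k]
      rw [e1, card_restrict x₀ u
        (fun c => ∀ k, cnt c k + (if u = k then 1 else 0) = g k)]
      by_cases hu : g u = 0
      · rw [if_pos hu]
        rw [Finset.card_eq_zero, Finset.filter_eq_empty_iff]
        intro c _ hall
        have := hall u
        simp [hu] at this
      · rw [if_neg hu]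
        have e2 : ((Finset.univ : Finset ({i : ι // i ≠ x₀} → ZMod 4)).filter
              fun c => ∀ k, cnt c k + (if u = k then 1 else 0) = g k)
            = Finset.univ.filter
              fun c : {i : ι // i ≠ x₀} → ZMod 4 => ∀ k, cnt c k = Function.update g u (g u - 1) k := by
          apply Finset.filter_congr
          intro c _
          constructor
          · intro h k
            have := h k
            rw [Function.update_apply]
            by_cases hk : k = u
            · subst hk; simp at this ⊢; omega
            · have hne : ¬(u = k) := fun h' => hk h'.symm
              simp [hk, hne] at this ⊢; omega
          · intro h k
            have := h k
            rw [Function.update_apply] at this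
            by_cases hk : k = u
            · subst hk; simp at this ⊢; omega
            · have hne : ¬(u = k) := fun h' => hk h'.symm
              simp [hk, hne] at this ⊢; omega
        rw [e2, ih _ hsub]
        have hgu : 1 ≤ g u := Nat.pos_of_ne_zero hu
        have hg1 : g u ≤ ∑ k : ZMod 4, g k :=
          Finset.single_le_sum (fun _ _ => Nat.zero_le _) (Finset.mem_univ u)
        have hs : ∑ k : ZMod 4, Function.update g u (g u - 1) k = (∑ k : ZMod 4, g k) - 1 := by
          rw [Finset.sum_update_of_mem (Finset.mem_univ u), Finset.sdiff_singleton_eq_erase]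
          have h3 : g u + ∑ k ∈ Finset.univ.erase u, g k = ∑ k : ZMod 4, g k :=
            Finset.add_sum_erase _ _ (Finset.mem_univ u)
          omega
        by_cases hS : (∑ k : ZMod 4, g k) = m + 1
        · rw [if_pos (by omega), if_pos hS]
        · rw [if_neg (by omega), if_neg hS]
    rw [Finset.sum_congr rfl (fun u _ => key u)]
    by_cases hS : (∑ k : ZMod 4, g k) = m + 1
    · rw [if_pos hS]
      simp only [if_pos hS]
      -- show ∑ u, (if g u = 0 then 0 else mult (update)) = mult g
      have hP : ∀ u : ZMod 4,
          (∏ k : ZMod 4, (g k)!) *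
            (if g u = 0 then 0 else Nat.multinomial Finset.univ (Function.update g u (g u - 1)))
          = g u * m ! := by
        intro u
        by_cases hu : g u = 0
        · simp [hu]
        · rw [if_neg hu]
          obtain ⟨j, hj⟩ : ∃ j, g u = j + 1 := ⟨g u - 1, by omega⟩
          have hfac : (∏ k : ZMod 4, (g k)!)
              = g u * ∏ k : ZMod 4, (Function.update g u (g u - 1) k)! := by
            rw [← Finset.mul_prod_erase Finset.univ (fun k => (g k)!) (Finset.mem_univ u),
              ← Finset.mul_prod_erase Finset.univ
                (fun k => (Function.update g u (g u - 1) k)!) (Finset.mem_univ u)]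
            have h4 : ∏ k ∈ Finset.univ.erase u, (Function.update g u (g u - 1) k)!
                = ∏ k ∈ Finset.univ.erase u, (g k)! :=
              Finset.prod_congr rfl fun k hk => by
                rw [Function.update_of_ne (Finset.mem_erase.mp hk).1]
            rw [h4, Function.update_self, hj]
            simp [Nat.factorial_succ]
            ring
          rw [hfac, mul_assoc, Nat.multinomial_spec]
          have hs : ∑ k : ZMod 4, Function.update g u (g u - 1) k = m := by
            rw [Finset.sum_update_of_mem (Finset.mem_univ u), Finset.sdiff_singleton_eq_erase]
            have h3 : g u + ∑ k ∈ Finset.univ.erase u, g k = ∑ k : ZMod 4, g k :=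
              Finset.add_sum_erase _ _ (Finset.mem_univ u)
            omega
          rw [hs]
      apply Nat.eq_of_mul_eq_mul_left (show 0 < ∏ k : ZMod 4, (g k)! from
        Finset.prod_pos fun _ _ => Nat.factorial_pos _)
      rw [Finset.mul_sum]
      rw [Finset.sum_congr rfl (fun u _ => hP u)]
      rw [← Finset.sum_mul, hS, Nat.multinomial_spec, hS]
      rw [Nat.factorial_succ]
    · rw [if_neg hS]
      apply Finset.sum_eq_zero
      intro u _
      by_cases hu : g u = 0 <;> simp [hu, hS]
lemma card_subtype_ne' (x₀ : ι) : Fintype.card {i : ι // i ≠ x₀} = Fintype.card ι - 1 := by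
  rw [Fintype.card_subtype]
  have h : (Finset.univ.filter fun i : ι => i ≠ x₀) = Finset.univ.erase x₀ := by
    ext i; simp [Finset.mem_erase, and_comm]
  rw [h, Finset.card_erase_of_mem (Finset.mem_univ _), Finset.card_univ]

lemma card_cnt_shift (ι : Type) [Fintype ι] [DecidableEq ι] (g e : ZMod 4 → ℕ) :
    ((Finset.univ : Finset (ι → ZMod 4)).filter fun c => ∀ k, cnt c k + e k = g k).card
      = if (∀ k, e k ≤ g k) ∧ (∑ k, g k = Fintype.card ι + ∑ k, e k)
        then Nat.multinomial Finset.univ (fun k => g k - e k) else 0 := by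
  by_cases hle : ∀ k, e k ≤ g k
  · have e1 : ((Finset.univ : Finset (ι → ZMod 4)).filter fun c => ∀ k, cnt c k + e k = g k)
        = Finset.univ.filter fun c : ι → ZMod 4 => ∀ k, cnt c k = g k - e k := by
      apply Finset.filter_congr
      intro c _
      constructor
      · intro h k; have := h k; have := hle k; omega
      · intro h k; have := h k; have := hle k; omega
    rw [e1, card_cnt_eq (Fintype.card ι) ι rfl]
    have hsum : (∑ k : ZMod 4, (g k - e k)) + ∑ k : ZMod 4, e k = ∑ k : ZMod 4, g k := by
      rw [← Finset.sum_add_distrib]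
      apply Finset.sum_congr rfl
      intro k _; have := hle k; omega
    by_cases hc : ∑ k : ZMod 4, g k = Fintype.card ι + ∑ k : ZMod 4, e k
    · rw [if_pos (by omega), if_pos ⟨hle, hc⟩]
    · rw [if_neg (by omega), if_neg (by tauto)]
  · rw [if_neg (by tauto), Finset.card_eq_zero, Finset.filter_eq_empty_iff]
    push_neg at hle
    obtain ⟨k0, hk0⟩ := hle
    intro c _ h
    have := h k0
    omega

lemma prod_fact_ratio (G : ZMod 4 → ℕ) (x y : ZMod 4)
    (hle : ∀ k, (if x = k then 1 else 0) + (if y = k then 1 else 0) ≤ G k) :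
    ∏ k, (G k)! = (if x = y then G x * (G x - 1) else G x * G y) *
      ∏ k, (G k - ((if x = k then 1 else 0) + (if y = k then 1 else 0)))! := by
  by_cases hxy : x = y
  · subst hxy
    rw [if_pos rfl]
    have hx : 2 ≤ G x := by have := hle x; simp at this; omega
    obtain ⟨j, hj⟩ : ∃ j, G x = j + 2 := ⟨G x - 2, by omega⟩
    rw [← Finset.mul_prod_erase Finset.univ (fun k => (G k)!) (Finset.mem_univ x),
      ← Finset.mul_prod_erase Finset.univ
        (fun k => (G k - ((if x = k then 1 else 0) + (if x = k then 1 else 0)))!)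
        (Finset.mem_univ x)]
    have htail : ∏ k ∈ Finset.univ.erase x,
          (G k - ((if x = k then 1 else 0) + (if x = k then 1 else 0)))!
        = ∏ k ∈ Finset.univ.erase x, (G k)! := by
      apply Finset.prod_congr rfl
      intro k hk
      have : ¬ (x = k) := fun h => (Finset.mem_erase.mp hk).1 h.symm
      simp [this]
    rw [htail]
    have hxx : (if x = x then (1:ℕ) else 0) = 1 := if_pos rfl
    rw [hxx, hj]
    have h5 : j + 2 - (1 + 1) = j := by omega
    have h6 : j + 2 - 1 = j + 1 := by omega
    rw [h5, h6]
    rw [show j + 2 = (j + 1) + 1 from rfl, Nat.factorial_succ, Nat.factorial_succ]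
    ring
  · rw [if_neg hxy]
    have hx : 1 ≤ G x := by have := hle x; simp [hxy] at this; omega
    have hy : 1 ≤ G y := by
      have := hle y
      have : (if x = y then 1 else 0) + (if y = y then 1 else 0) ≤ G y := this
      simp [hxy] at this; omega
    obtain ⟨jx, hjx⟩ : ∃ j, G x = j + 1 := ⟨G x - 1, by omega⟩
    obtain ⟨jy, hjy⟩ : ∃ j, G y = j + 1 := ⟨G y - 1, by omega⟩
    have hymem : y ∈ Finset.univ.erase x := Finset.mem_erase.mpr ⟨fun h => hxy h.symm, Finset.mem_univ _⟩
    rw [← Finset.mul_prod_erase Finset.univ (fun k => (G k)!) (Finset.mem_univ x),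
      ← Finset.mul_prod_erase _ (fun k => (G k)!) hymem,
      ← Finset.mul_prod_erase Finset.univ
        (fun k => (G k - ((if x = k then 1 else 0) + (if y = k then 1 else 0)))!)
        (Finset.mem_univ x),
      ← Finset.mul_prod_erase _
        (fun k => (G k - ((if x = k then 1 else 0) + (if y = k then 1 else 0)))!)
        hymem]
    have htail : ∏ k ∈ (Finset.univ.erase x).erase y,
          (G k - ((if x = k then 1 else 0) + (if y = k then 1 else 0)))!
        = ∏ k ∈ (Finset.univ.erase x).erase y, (G k)! := by
      apply Finset.prod_congr rfl
      intro k hk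
      have h1 : ¬ (y = k) := fun h => (Finset.mem_erase.mp hk).1 h.symm
      have h2 : ¬ (x = k) := fun h => (Finset.mem_erase.mp (Finset.mem_erase.mp hk).2).1 h.symm
      simp [h1, h2]
    rw [htail]
    have hyy : ¬ (y = x) := fun h => hxy h.symm
    have hxx : (if x = x then (1:ℕ) else 0) = 1 := if_pos rfl
    have hyy2 : (if y = y then (1:ℕ) else 0) = 1 := if_pos rfl
    have hxy0 : (if x = y then (1:ℕ) else 0) = 0 := if_neg hxy
    have hyx0 : (if y = x then (1:ℕ) else 0) = 0 := if_neg hyy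
    rw [hxx, hyy2, hxy0, hyx0, hjx, hjy]
    have e1 : jx + 1 - (1 + 0) = jx := by omega
    have e2 : jy + 1 - (0 + 1) = jy := by omega
    rw [e1, e2, Nat.factorial_succ, Nat.factorial_succ]
    ring

lemma sum16 {M : Type*} [AddCommMonoid M] (F : ZMod 4 → ZMod 4 → M) :
    ∑ z : ZMod 4 × ZMod 4, F z.1 z.2
      = (F 0 0 + (F 0 1 + (F 0 2 + F 0 3)))
        + ((F 1 0 + (F 1 1 + (F 1 2 + F 1 3)))
        + ((F 2 0 + (F 2 1 + (F 2 2 + F 2 3)))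
        + (F 3 0 + (F 3 1 + (F 3 2 + F 3 3))))) := by
  rw [Fintype.sum_prod_type]
  simp only [zmod4_sum]

theorem lambda_of_type_01n21 (r s n : ℕ) (hrs : s ≤ r) (hn : n = 2 * (r + s))
    (hn2 : 2 ≤ n) (v : Fin n → ZMod 4) (hv : HasType v 0 1 (n - 2) 1) :
    ((n : ℤ) - 1) * lambdaEV r s v = -(multinomRSRS r s : ℤ) := by
  classical
  obtain ⟨hv0, hv1, hv2t, hv3⟩ := hv
  unfold typeCount at hv0 hv1 hv2t hv3
  obtain ⟨p, hp⟩ := Finset.card_eq_one.mp hv1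
  obtain ⟨q, hq⟩ := Finset.card_eq_one.mp hv3
  have hvp : v p = 1 := by
    have hmem : p ∈ Finset.univ.filter fun i => v i = 1 := hp ▸ Finset.mem_singleton_self p
    exact (Finset.mem_filter.mp hmem).2
  have hvq : v q = 3 := by
    have hmem : q ∈ Finset.univ.filter fun i => v i = 3 := hq ▸ Finset.mem_singleton_self q
    exact (Finset.mem_filter.mp hmem).2
  have hpq : p ≠ q := by
    intro h; rw [h, hvq] at hvp; exact absurd hvp (by decide)
  have hqp : q ≠ p := fun h => hpq h.symm
  have hv2' : ∀ i, i ≠ p → i ≠ q → v i = 2 := by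
    intro i hip hiq
    rcases zmod4_cases (v i) with h | h | h | h
    · exfalso
      have hmem : i ∈ Finset.univ.filter fun j => v j = 0 :=
        Finset.mem_filter.mpr ⟨Finset.mem_univ _, h⟩
      rw [Finset.card_eq_zero.mp hv0] at hmem
      exact absurd hmem (Finset.notMem_empty i)
    · exfalso; apply hip
      have hmem : i ∈ Finset.univ.filter fun j => v j = 1 :=
        Finset.mem_filter.mpr ⟨Finset.mem_univ _, h⟩
      rw [hp] at hmem; exact Finset.mem_singleton.mp hmem
    · exact h
    · exfalso; apply hiq
      have hmem : i ∈ Finset.univ.filter fun j => v j = 3 :=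
        Finset.mem_filter.mpr ⟨Finset.mem_univ _, h⟩
      rw [hq] at hmem; exact Finset.mem_singleton.mp hmem
  -- the dot product with a vector of type (r,s,r,s) is b q - b p
  have hdot : ∀ b : Fin n → ZMod 4, HasType b r s r s → (∑ i, v i * b i) = b q - b p := by
    intro b hb
    obtain ⟨hb0, hb1, hb2, hb3⟩ := hb
    unfold typeCount at hb0 hb1 hb2 hb3
    have hsumb : (2 : ZMod 4) * (∑ i, b i) = 0 := by
      have hfib : (∑ i, b i)
          = ∑ k : ZMod 4, ∑ i ∈ Finset.univ.filter (fun i => b i = k), b i :=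
        (Finset.sum_fiberwise_of_maps_to (fun i _ => Finset.mem_univ (b i)) _).symm
      have hinner : ∀ k : ZMod 4, ∑ i ∈ Finset.univ.filter (fun i => b i = k), b i
          = ((Finset.univ.filter (fun i => b i = k)).card) • k := by
        intro k
        rw [Finset.sum_congr rfl (fun i hi => (Finset.mem_filter.mp hi).2), Finset.sum_const]
      rw [hfib, Finset.sum_congr rfl fun k _ => hinner k, zmod4_sum]
      rw [hb0, hb1, hb2, hb3]
      have h1 : (r • (0:ZMod 4) + (s • (1:ZMod 4) + (r • (2:ZMod 4) + s • (3:ZMod 4))))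
          = ((s : ZMod 4) + 2 * (r : ZMod 4) + 3 * (s : ZMod 4)) := by
        simp [nsmul_eq_mul]
        ring
      rw [h1]
      have h4 : ((4 : ℕ) : ZMod 4) = 0 := by decide
      calc (2:ZMod 4) * ((s : ZMod 4) + 2 * (r : ZMod 4) + 3 * (s : ZMod 4))
          = ((4:ℕ) : ZMod 4) * (2 * (s : ZMod 4) + (r : ZMod 4)) := by push_cast; ring
        _ = 0 := by rw [h4]; ring
    have hsplit : ∀ i, v i * b i
        = 2 * b i + ((if i = p then -(b i) else 0) + (if i = q then b i else 0)) := by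
      intro i
      by_cases hip : i = p
      · subst hip
        rw [hvp, if_pos rfl, if_neg hpq]
        ring
      · by_cases hiq : i = q
        · subst hiq
          rw [hvq, if_neg hip, if_pos rfl]
          ring
        · rw [hv2' i hip hiq, if_neg hip, if_neg hiq]
          ring
    rw [Finset.sum_congr rfl fun i _ => hsplit i]
    rw [Finset.sum_add_distrib, Finset.sum_add_distrib, ← Finset.mul_sum]
    rw [Finset.sum_ite_eq' Finset.univ p fun i => -(b i)]
    rw [Finset.sum_ite_eq' Finset.univ q fun i => b i]
    rw [hsumb]
    simp only [Finset.mem_univ, if_true]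
    ring
  -- the target counts
  set G : ZMod 4 → ℕ := fun k => if k = 0 then r else if k = 1 then s else if k = 2 then r else s
    with hG
  have t10 : (1:ZMod 4) ≠ 0 := by decide
  have t20 : (2:ZMod 4) ≠ 0 := by decide
  have t21 : (2:ZMod 4) ≠ 1 := by decide
  have t30 : (3:ZMod 4) ≠ 0 := by decide
  have t31 : (3:ZMod 4) ≠ 1 := by decide
  have t32 : (3:ZMod 4) ≠ 2 := by decide
  have hG0 : G 0 = r := by simp [hG]
  have hG1 : G 1 = s := by simp [hG, t10]
  have hG2 : G 2 = r := by simp [hG, t20, t21]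
  have hG3 : G 3 = s := by simp [hG, t30, t31, t32]
  have hHT : ∀ b : Fin n → ZMod 4, HasType b r s r s ↔ ∀ k, cnt b k = G k := by
    intro b
    constructor
    · rintro ⟨h0, h1, h2, h3⟩ k
      rcases zmod4_cases k with rfl | rfl | rfl | rfl
      · rw [hG0]; exact h0
      · rw [hG1]; exact h1
      · rw [hG2]; exact h2
      · rw [hG3]; exact h3
    · intro h
      exact ⟨(h 0).trans hG0, (h 1).trans hG1, (h 2).trans hG2, (h 3).trans hG3⟩
  set e : ZMod 4 → ZMod 4 → ZMod 4 → ℕ :=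
    fun x y k => (if x = k then 1 else 0) + (if y = k then 1 else 0) with he
  set Q : ZMod 4 → ZMod 4 → ℕ := fun x y =>
    ((Finset.univ : Finset (Fin n → ZMod 4)).filter
      fun b => HasType b r s r s ∧ b p = x ∧ b q = y).card with hQdef
  have hGsum : ∑ k, G k = n := by
    rw [zmod4_sum, hG0, hG1, hG2, hG3]; omega
  have hEsum : ∀ x y : ZMod 4, ∑ k, e x y k = 2 := by
    intro x y
    simp only [he]
    rw [Finset.sum_add_distrib, Finset.sum_ite_eq, Finset.sum_ite_eq]
    simp
  -- evaluate Q by stripping off the two coordinates p and q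
  have hQ : ∀ x y : ZMod 4, Q x y =
      if (∀ k, e x y k ≤ G k) then Nat.multinomial Finset.univ (fun k => G k - e x y k)
      else 0 := by
    intro x y
    simp only [hQdef]
    have e1 : ((Finset.univ : Finset (Fin n → ZMod 4)).filter
          fun b => HasType b r s r s ∧ b p = x ∧ b q = y)
        = Finset.univ.filter fun b : Fin n → ZMod 4 => b p = x ∧
            ((fun c : {i : Fin n // i ≠ p} → ZMod 4 =>
              c ⟨q, hqp⟩ = y ∧ (∀ k, cnt c k + (if x = k then 1 else 0) = G k))
              (fun i => b i.1)) := by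
      apply Finset.filter_congr
      intro b _
      simp only
      constructor
      · rintro ⟨h1, h2, h3⟩
        refine ⟨h2, h3, fun k => ?_⟩
        rw [← (hHT b).mp h1 k, cnt_split p b k, h2]
      · rintro ⟨h2, h3, h4⟩
        refine ⟨(hHT b).mpr fun k => ?_, h2, h3⟩
        rw [cnt_split p b k, h2, h4 k]
    rw [e1, card_restrict p x
      (fun c => c ⟨q, hqp⟩ = y ∧ ∀ k, (cnt c k + if x = k then 1 else 0) = G k)]
    have e2 : ((Finset.univ : Finset ({i : Fin n // i ≠ p} → ZMod 4)).filter
          fun c => c ⟨q, hqp⟩ = y ∧ (∀ k, cnt c k + (if x = k then 1 else 0) = G k))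
        = Finset.univ.filter fun c : {i : Fin n // i ≠ p} → ZMod 4 => c ⟨q, hqp⟩ = y ∧
            ((fun d : {j : {i : Fin n // i ≠ p} // j ≠ ⟨q, hqp⟩} → ZMod 4 =>
              ∀ k, cnt d k + e x y k = G k)
              (fun j => c j.1)) := by
      apply Finset.filter_congr
      intro c _
      simp only
      constructor
      · rintro ⟨h2, h3⟩
        refine ⟨h2, fun k => ?_⟩
        have := h3 k
        rw [cnt_split (⟨q, hqp⟩ : {i : Fin n // i ≠ p}) c k, h2] at this
        simp only [he]
        by_cases hyk : y = k <;> simp [hyk] at this ⊢ <;> omega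
      · rintro ⟨h2, h3⟩
        refine ⟨h2, fun k => ?_⟩
        have := h3 k
        simp only [he] at this
        rw [cnt_split (⟨q, hqp⟩ : {i : Fin n // i ≠ p}) c k, h2]
        by_cases hyk : y = k <;> simp [hyk] at this ⊢ <;> omega
    rw [e2, card_restrict (⟨q, hqp⟩ : {i : Fin n // i ≠ p}) y
      (fun d => ∀ k, cnt d k + e x y k = G k)]
    rw [card_cnt_shift]
    have hcard2 : Fintype.card {j : {i : Fin n // i ≠ p} // j ≠ ⟨q, hqp⟩} = n - 2 := by
      rw [card_subtype_ne', card_subtype_ne', Fintype.card_fin]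
      omega
    rw [hcard2, hGsum, hEsum x y]
    by_cases hle : ∀ k, e x y k ≤ G k
    · rw [if_pos ⟨hle, by omega⟩, if_pos hle]
    · rw [if_neg (fun hc => hle hc.1), if_neg hle]
  set D : ℕ := r ! * (s ! * (r ! * s !)) with hD
  have hDG : D = ∏ k : ZMod 4, (G k)! := by
    rw [zmod4_prod, hG0, hG1, hG2, hG3]
  set w : ZMod 4 → ZMod 4 → ℕ :=
    fun x y => if x = y then G x * (G x - 1) else G x * G y with hw
  have keyQ : ∀ x y : ZMod 4, D * Q x y = w x y * (n - 2)! := by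
    intro x y
    rw [hQ x y]
    by_cases hle : ∀ k, e x y k ≤ G k
    · rw [if_pos hle, hDG]
      have hle' : ∀ k, (if x = k then 1 else 0) + (if y = k then 1 else 0) ≤ G k := by
        intro k; have := hle k; simp only [he] at this; exact this
      rw [prod_fact_ratio G x y hle']
      have heq : (fun k => G k - e x y k)
          = fun k => G k - ((if x = k then 1 else 0) + (if y = k then 1 else 0)) := by
        funext k; simp only [he]
      rw [heq, mul_assoc, Nat.multinomial_spec]
      have hssum : ∑ k : ZMod 4, (G k - ((if x = k then 1 else 0) + (if y = k then 1 else 0)))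
          = n - 2 := by
        have h1 : ∑ k : ZMod 4,
              (G k - ((if x = k then 1 else 0) + (if y = k then 1 else 0)))
              + ∑ k : ZMod 4, ((if x = k then 1 else 0) + (if y = k then 1 else 0))
            = ∑ k : ZMod 4, G k := by
          rw [← Finset.sum_add_distrib]
          apply Finset.sum_congr rfl
          intro k _
          have := hle' k
          omega
        have h2 : ∑ k : ZMod 4, ((if x = k then 1 else 0) + (if y = k then 1 else 0)) = 2 := by
          have := hEsum x y
          simp only [he] at this
          exact this
        omega
      rw [hssum]
    · rw [if_neg hle, Nat.mul_zero]
      push_neg at hle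
      obtain ⟨k0, hk0⟩ := hle
      simp only [he] at hk0
      have hw0 : w x y = 0 := by
        simp only [hw]
        by_cases hxy : x = y
        · subst hxy
          rw [if_pos rfl]
          have hkx : k0 = x := by
            by_contra hne
            have hne' : ¬ (x = k0) := fun h => hne h.symm
            simp [hne'] at hk0
          subst hkx
          simp at hk0
          have hcase : G k0 = 0 ∨ G k0 = 1 := by omega
          rcases hcase with h | h <;> simp [h]
        · rw [if_neg hxy]
          have hk : k0 = x ∨ k0 = y := by
            by_contra hne
            push_neg at hne
            have h1 : ¬ (x = k0) := fun h => hne.1 h.symm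
            have h2 : ¬ (y = k0) := fun h => hne.2 h.symm
            simp [h1, h2] at hk0
          rcases hk with rfl | rfl
          · have h2 : ¬ (y = k0) := fun h => hxy h.symm
            simp [h2] at hk0
            have : G k0 = 0 := by omega
            simp [this]
          · have h2 : ¬ (x = k0) := hxy
            simp [h2] at hk0
            have : G k0 = 0 := by omega
            simp [this]
      rw [hw0, Nat.zero_mul]
  -- decompose Scard over the values of (b p, b q)
  have hSc : ∀ a : ZMod 4, Scard r s v a
      = ∑ z : ZMod 4 × ZMod 4, (if z.2 - z.1 = a then Q z.1 z.2 else 0) := by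
    intro a
    unfold Scard
    have e0 : ((Finset.univ : Finset (Fin n → ZMod 4)).filter
          fun b => HasType b r s r s ∧ (∑ i, v i * b i) = a)
        = Finset.univ.filter fun b : Fin n → ZMod 4 => HasType b r s r s ∧ b q - b p = a := by
      apply Finset.filter_congr
      intro b _
      constructor
      · rintro ⟨h1, h2⟩; exact ⟨h1, by rw [← hdot b h1]; exact h2⟩
      · rintro ⟨h1, h2⟩; exact ⟨h1, by rw [hdot b h1]; exact h2⟩
    rw [e0]
    rw [Finset.card_eq_sum_card_fiberwise
      (f := fun b : Fin n → ZMod 4 => (b p, b q)) (t := Finset.univ)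
      (fun _ _ => Finset.mem_univ _)]
    apply Finset.sum_congr rfl
    rintro ⟨x, y⟩ _
    rw [Finset.filter_filter]
    by_cases hxy : y - x = a
    · rw [if_pos hxy]
      simp only [hQdef]
      congr 1
      apply Finset.filter_congr
      intro b _
      constructor
      · rintro ⟨⟨h1, h2⟩, h3⟩
        obtain ⟨hx, hy⟩ := Prod.mk.injEq .. ▸ h3
        exact ⟨h1, hx, hy⟩
      · rintro ⟨h1, hx, hy⟩
        exact ⟨⟨h1, by rw [hx, hy, hxy]⟩, by rw [hx, hy]⟩
    · rw [if_neg hxy, Finset.card_eq_zero, Finset.filter_eq_empty_iff]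
      rintro b _ ⟨⟨h1, h2⟩, h3⟩
      obtain ⟨hx, hy⟩ := Prod.mk.injEq .. ▸ h3
      apply hxy
      rw [← hx, ← hy]
      exact h2
  -- evaluate the two sums
  have hS0 : Scard r s v 0 = Q 0 0 + (Q 1 1 + (Q 2 2 + Q 3 3)) := by
    rw [hSc 0, sum16 (fun x y => if y - x = 0 then Q x y else 0)]
    rw [if_pos (by decide), if_neg (by decide), if_neg (by decide), if_neg (by decide),
      if_neg (by decide), if_pos (by decide), if_neg (by decide), if_neg (by decide),
      if_neg (by decide), if_neg (by decide), if_pos (by decide), if_neg (by decide),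
      if_neg (by decide), if_neg (by decide), if_neg (by decide), if_pos (by decide)]
    omega
  have hS2 : Scard r s v 2 = Q 0 2 + (Q 1 3 + (Q 2 0 + Q 3 1)) := by
    rw [hSc 2, sum16 (fun x y => if y - x = 2 then Q x y else 0)]
    rw [if_neg (by decide), if_neg (by decide), if_pos (by decide), if_neg (by decide),
      if_neg (by decide), if_neg (by decide), if_neg (by decide), if_pos (by decide),
      if_pos (by decide), if_neg (by decide), if_neg (by decide), if_neg (by decide),
      if_neg (by decide), if_pos (by decide), if_neg (by decide), if_neg (by decide)]
    omega
  -- values of w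
  have hw00 : w 0 0 = r * (r - 1) := by simp only [hw]; simp [hG0]
  have hw11 : w 1 1 = s * (s - 1) := by simp only [hw]; simp [hG1]
  have hw22 : w 2 2 = r * (r - 1) := by simp only [hw]; simp [hG2]
  have hw33 : w 3 3 = s * (s - 1) := by simp only [hw]; simp [hG3]
  have hw02 : w 0 2 = r * r := by
    simp only [hw]; rw [if_neg (by decide), hG0, hG2]
  have hw13 : w 1 3 = s * s := by
    simp only [hw]; rw [if_neg (by decide), hG1, hG3]
  have hw20 : w 2 0 = r * r := by
    simp only [hw]; rw [if_neg (by decide), hG2, hG0]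
  have hw31 : w 3 1 = s * s := by
    simp only [hw]; rw [if_neg (by decide), hG3, hG1]
  -- D times the two Scards
  have hDS0 : D * Scard r s v 0 = (2 * (r * (r - 1)) + 2 * (s * (s - 1))) * (n - 2)! := by
    rw [hS0, Nat.mul_add, Nat.mul_add, Nat.mul_add, keyQ, keyQ, keyQ, keyQ,
      hw00, hw11, hw22, hw33]
    ring
  have hDS2 : D * Scard r s v 2 = (2 * (r * r) + 2 * (s * s)) * (n - 2)! := by
    rw [hS2, Nat.mul_add, Nat.mul_add, Nat.mul_add, keyQ, keyQ, keyQ, keyQ,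
      hw02, hw13, hw20, hw31]
    ring
  -- pass to the integers
  have hr1 : 1 ≤ r := by omega
  have hcast : ∀ t : ℕ, ((t * (t - 1) : ℕ) : ℤ) = (t : ℤ) * (t : ℤ) - t := by
    intro t
    cases t with
    | zero => simp
    | succ u => push_cast [Nat.succ_sub_one]; ring
  have hDlam : (D : ℤ) * lambdaEV r s v = -(n : ℤ) * ((n - 2)! : ℤ) := by
    unfold lambdaEV
    have h0 : (D : ℤ) * (Scard r s v 0 : ℤ) = ((2 * (r * (r - 1)) + 2 * (s * (s - 1))) * (n - 2)! : ℕ) := by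
      rw [← hDS0]; push_cast; ring
    have h2 : (D : ℤ) * (Scard r s v 2 : ℤ) = ((2 * (r * r) + 2 * (s * s)) * (n - 2)! : ℕ) := by
      rw [← hDS2]; push_cast; ring
    rw [mul_sub, h0, h2]
    push_cast [hcast]
    rw [show ((n : ℤ)) = 2 * ((r : ℤ) + s) from by exact_mod_cast hn]
    ring
  -- D * multinomial = n!
  have hDmult : D * multinomRSRS r s = n ! := by
    unfold multinomRSRS
    have hspec := Nat.multinomial_spec (Finset.univ : Finset (Fin 4)) ![r, s, r, s]
    have hprod : ∏ i : Fin 4, (![r, s, r, s] i)! = D := by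
      rw [Fin.prod_univ_four]
      simp [hD]
      ring
    have hsum : ∑ i : Fin 4, ![r, s, r, s] i = n := by
      rw [Fin.sum_univ_four]
      simp
      omega
    rw [← hprod, hspec, hsum]
  -- finish
  have hfact : (n : ℤ) * ((n - 1 : ℕ) : ℤ) * ((n - 2)! : ℤ) = (n ! : ℤ) := by
    obtain ⟨m, hm⟩ : ∃ m, n = m + 2 := ⟨n - 2, by omega⟩
    subst hm
    have : (m + 2)! = (m + 2) * ((m + 1) * m !) := by
      rw [show m + 2 = (m + 1) + 1 from rfl, Nat.factorial_succ, Nat.factorial_succ]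
    rw [this]
    push_cast [show m + 2 - 1 = m + 1 from rfl, show m + 2 - 2 = m from rfl]
    ring
  have hD0 : (D : ℤ) ≠ 0 := by
    rw [hD]; push_cast
    positivity
  apply mul_left_cancel₀ hD0
  have hn1 : ((n : ℤ) - 1) = ((n - 1 : ℕ) : ℤ) := by
    have : (1:ℕ) ≤ n := by omega
    push_cast [this]
    ring
  calc (D : ℤ) * (((n : ℤ) - 1) * lambdaEV r s v)
      = ((n : ℤ) - 1) * ((D : ℤ) * lambdaEV r s v) := by ring
    _ = ((n : ℤ) - 1) * (-(n : ℤ) * ((n - 2)! : ℤ)) := by rw [hDlam]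
    _ = -((n : ℤ) * ((n - 1 : ℕ) : ℤ) * ((n - 2)! : ℤ)) := by rw [hn1]; ring
    _ = -((n ! : ℤ)) := by rw [hfact]
    _ = -((D * multinomRSRS r s : ℕ) : ℤ) := by rw [hDmult]
    _ = (D : ℤ) * (-(multinomRSRS r s : ℤ)) := by push_cast; ring
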